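/- arXiv:2504.03754 — 3 statements merged into one kernel-verified Lean document; each statement's English description precedes it below -/
import Mathlib

section
/- Let Ω be a measurable space, μ a probability measure on Ω, and (B x)_{x : ι} a family of measurable sets that is independent with respect to μ (ProbabilityTheory.iIndepSet). Then for all finite sets S T : Finset ι, (μ ((⋂ x ∈ S, B x) ∩ (⋂ x ∈ T, B x)ᶜ)).toReal = (∏ x ∈ S, (μ (B x)).toReal) * (1 − ∏ x ∈ T \ S, (μ (B x)).toReal). -/
open MeasureTheory

/-- Exact version of Equation (4): for independent branch-execution events, the
probability that all branches in S execute while not all branches in T execute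
factors as a product. -/
theorem prob_branches_exact {Ω ι : Type*} [MeasurableSpace Ω] [DecidableEq ι]
    (μ : Measure Ω) [IsProbabilityMeasure μ]
    (B : ι → Set Ω) (hmeas : ∀ x, MeasurableSet (B x))
    (hind : ProbabilityTheory.iIndepSet B μ)
    (S T : Finset ι) :
    (μ ((⋂ x ∈ S, B x) ∩ (⋂ x ∈ T, B x)ᶜ)).toReal =
      (∏ x ∈ S, (μ (B x)).toReal) * (1 - ∏ x ∈ T \ S, (μ (B x)).toReal) := by
  have key : ∀ s : Finset ι, μ (⋂ x ∈ s, B x) = ∏ x ∈ s, μ (B x) :=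
    fun s => hind.meas_biInter s
  have hmA : MeasurableSet (⋂ x ∈ S, B x) := MeasurableSet.biInter S.countable_toSet (fun x _ => hmeas x)
  have hmC : MeasurableSet (⋂ x ∈ T, B x) := MeasurableSet.biInter T.countable_toSet (fun x _ => hmeas x)
  have hsub : (⋂ x ∈ S, B x) ∩ (⋂ x ∈ T, B x) ⊆ (⋂ x ∈ S, B x) := Set.inter_subset_left
  have hsplit : μ (⋂ x ∈ S, B x) = μ ((⋂ x ∈ S, B x) ∩ (⋂ x ∈ T, B x)ᶜ) + μ ((⋂ x ∈ S, B x) ∩ (⋂ x ∈ T, B x)) := by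
    rw [add_comm, ← measure_inter_add_diff _ hmC, Set.diff_eq]
  have hunion : (⋂ x ∈ S, B x) ∩ (⋂ x ∈ T, B x) = ⋂ x ∈ S ∪ T, B x := by
    ext ω; simp [and_assoc, forall_and, or_imp]
  have h1 : μ ((⋂ x ∈ S, B x) ∩ (⋂ x ∈ T, B x)ᶜ)
      = μ (⋂ x ∈ S, B x) - μ (⋂ x ∈ S ∪ T, B x) := by
    rw [hsplit, hunion]
    rw [ENNReal.add_sub_cancel_right (measure_ne_top _ _)]
  rw [h1, key, key]
  have hST : ∏ x ∈ S ∪ T, μ (B x) = (∏ x ∈ S, μ (B x)) * ∏ x ∈ T \ S, μ (B x) := by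
    rw [← Finset.prod_union (Finset.disjoint_sdiff)]
    congr 1
    rw [Finset.union_sdiff_self_eq_union]
  rw [hST]
  have hfin : ∀ s : Finset ι, ∏ x ∈ s, μ (B x) ≠ ⊤ := fun s =>
    ENNReal.prod_ne_top (fun x _ => measure_ne_top _ _)
  have hle : (∏ x ∈ S, μ (B x)) * ∏ x ∈ T \ S, μ (B x) ≤ ∏ x ∈ S, μ (B x) := by
    calc (∏ x ∈ S, μ (B x)) * ∏ x ∈ T \ S, μ (B x)
        ≤ (∏ x ∈ S, μ (B x)) * 1 := by
          gcongr
          exact Finset.prod_le_one (fun _ _ => zero_le) (fun x _ => prob_le_one)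
      _ = _ := mul_one _
  rw [ENNReal.toReal_sub_of_le hle (hfin S), ENNReal.toReal_mul, ENNReal.toReal_prod, ENNReal.toReal_prod, mul_one_sub]
end

section
/- Let Ω be a measurable space, μ a probability measure on Ω, and (B x)_{x : ι} a family of measurable sets that is independent with respect to μ (ProbabilityTheory.iIndepSet). Let S T : Finset ι and let E be a measurable set with E ⊆ ⋂ x ∈ S, B x. Then (μ (E ∩ (⋂ x ∈ T, B x)ᶜ)).toReal ≤ (∏ x ∈ S, (μ (B x)).toReal) * (1 − ∏ x ∈ T \ S, (μ (B x)).toReal). -/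
open MeasureTheory

/-- Equation (4): the probability that E occurs (entailing all branches in S execute)
while not all branches in T execute is bounded by the product formula. -/
theorem prob_branches_bound {Ω ι : Type*} [MeasurableSpace Ω] [DecidableEq ι]
    (μ : Measure Ω) [IsProbabilityMeasure μ]
    (B : ι → Set Ω) (hmeas : ∀ x, MeasurableSet (B x))
    (hind : ProbabilityTheory.iIndepSet B μ)
    (S T : Finset ι) (E : Set Ω) (hE : MeasurableSet E)
    (hES : E ⊆ ⋂ x ∈ S, B x) :
    (μ (E ∩ (⋂ x ∈ T, B x)ᶜ)).toReal ≤
      (∏ x ∈ S, (μ (B x)).toReal) * (1 - ∏ x ∈ T \ S, (μ (B x)).toReal) := by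
  set A : Set Ω := ⋂ x ∈ S, B x with hA
  set C : Set Ω := ⋂ x ∈ (T \ S), B x with hC
  have hCmeas : MeasurableSet C :=
    MeasurableSet.biInter ((T \ S) : Finset ι).countable_toSet fun x _ => hmeas x
  -- subset
  have hsub : E ∩ (⋂ x ∈ T, B x)ᶜ ⊆ A ∩ Cᶜ := by
    rintro ω ⟨hωE, hωT⟩
    refine ⟨hES hωE, fun hωC => hωT ?_⟩
    have hωS : ∀ x ∈ S, ω ∈ B x := Set.mem_iInter₂.mp (hES hωE)
    have hωC' : ∀ x ∈ T \ S, ω ∈ B x := Set.mem_iInter₂.mp hωC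
    refine Set.mem_iInter₂.mpr fun x hx => ?_
    by_cases hxS : x ∈ S
    · exact hωS x hxS
    · exact hωC' x (Finset.mem_sdiff.mpr ⟨hx, hxS⟩)
  -- measures of intersections
  have hAC : A ∩ C = ⋂ x ∈ (S ∪ (T \ S)), B x := by
    rw [hA, hC]
    ext ω
    simp only [Set.mem_inter_iff, Set.mem_iInter, Finset.mem_union, Finset.mem_sdiff]
    constructor
    · rintro ⟨h1, h2⟩ x hx
      rcases hx with hx | hx
      · exact h1 x hx
      · exact h2 x hx
    · intro h
      exact ⟨fun x hx => h x (Or.inl hx), fun x hx => h x (Or.inr hx)⟩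
  have hmuA : μ A = ∏ x ∈ S, μ (B x) := hind.meas_biInter S
  have hdisj : Disjoint S (T \ S) := Finset.disjoint_sdiff
  have hmuAC : μ (A ∩ C) = (∏ x ∈ S, μ (B x)) * ∏ x ∈ (T \ S), μ (B x) := by
    rw [hAC, hind.meas_biInter, Finset.prod_union hdisj]
  have hsplit : μ (A ∩ C) + μ (A \ C) = μ A := measure_inter_add_diff A hCmeas
  have hACne : μ (A ∩ C) ≠ ⊤ := measure_ne_top μ _
  have hAdne : μ (A \ C) ≠ ⊤ := measure_ne_top μ _
  have htoReal : (μ (A \ C)).toReal =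
      (∏ x ∈ S, (μ (B x)).toReal) * (1 - ∏ x ∈ (T \ S), (μ (B x)).toReal) := by
    have h1 : (μ (A \ C)).toReal = (μ A).toReal - (μ (A ∩ C)).toReal := by
      have := congrArg ENNReal.toReal hsplit
      rw [ENNReal.toReal_add hACne hAdne] at this
      linarith
    rw [h1, hmuA, hmuAC, ENNReal.toReal_mul, ENNReal.toReal_prod, ENNReal.toReal_prod]
    ring
  have hmono : μ (E ∩ (⋂ x ∈ T, B x)ᶜ) ≤ μ (A \ C) := by
    rw [Set.diff_eq]; exact measure_mono hsub
  calc (μ (E ∩ (⋂ x ∈ T, B x)ᶜ)).toReal ≤ (μ (A \ C)).toReal :=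
        ENNReal.toReal_mono hAdne hmono
    _ = _ := htoReal
end

section
/- Let Ω be a measurable space, μ a probability measure, and (B x)_{x : ι} a family of measurable sets independent with respect to μ (ProbabilityTheory.iIndepSet). Let n : ℕ, T : Fin n → Finset ι, and let E : Fin n → Set Ω be measurable sets that are pairwise disjoint, whose union is all of Ω, and such that for every h : Fin n, E h ⊆ ⋂ x ∈ T h, B x, and E s ⊆ (⋂ x ∈ T h, B x)ᶜ whenever s > h. Define r : Fin n → ℝ by the recursion r h = (∏ x ∈ T h, (μ (B x)).toReal) + (∑ l with l < h, (∏ x ∈ T l, (μ (B x)).toReal) * (1 − ∏ x ∈ T h \ T l, (μ (B x)).toReal)) − (∑ l with l < h, r l). Then for every h : Fin n, ∑ l with l ≤ h, r l ≥ ∑ l with l ≤ h, (μ (E l)).toReal. -/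
open MeasureTheory

/-- Theorem 3: the probabilities r computed by the analysis (via Equations (1), (3)
and (4)) yield a cumulative distribution that upper-bounds the exact cumulative
probability. -/
theorem pDAG_cumulative_bound {Ω ι : Type*} [MeasurableSpace Ω] [DecidableEq ι]
    (μ : Measure Ω) [IsProbabilityMeasure μ]
    (B : ι → Set Ω) (hmeas : ∀ x, MeasurableSet (B x))
    (hind : ProbabilityTheory.iIndepSet B μ)
    (n : ℕ) (T : Fin n → Finset ι) (E : Fin n → Set Ω)
    (hE : ∀ i, MeasurableSet (E i))
    (hdisj : Pairwise (Function.onFun Disjoint E))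
    (hcover : (⋃ i, E i) = Set.univ)
    (hsub : ∀ h : Fin n, E h ⊆ ⋂ x ∈ T h, B x)
    (hcomp : ∀ h s : Fin n, h < s → E s ⊆ (⋂ x ∈ T h, B x)ᶜ)
    (r : Fin n → ℝ)
    (hr : ∀ h : Fin n,
      r h = (∏ x ∈ T h, (μ (B x)).toReal)
        + (∑ l ∈ Finset.univ.filter (fun l => l < h),
            (∏ x ∈ T l, (μ (B x)).toReal) * (1 - ∏ x ∈ T h \ T l, (μ (B x)).toReal))
        - (∑ l ∈ Finset.univ.filter (fun l => l < h), r l)) :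
    ∀ h : Fin n,
      (∑ l ∈ Finset.univ.filter (fun l => l ≤ h), (μ (E l)).toReal) ≤
        ∑ l ∈ Finset.univ.filter (fun l => l ≤ h), r l := by
  classical
  intro h
  set A : Fin n → Set Ω := fun l => ⋂ x ∈ T l, B x with hAdef
  have hAmeas : ∀ l, MeasurableSet (A l) :=
    fun l => MeasurableSet.biInter (Finset.countable_toSet _) (fun x _ => hmeas x)
  have hfin : ∀ s : Set Ω, μ s ≠ ⊤ := fun s => (measure_lt_top μ s).ne
  have hprod : ∀ s : Finset ι, (μ (⋂ x ∈ s, B x)).toReal = ∏ x ∈ s, (μ (B x)).toReal := by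
    intro s
    rw [hind.meas_biInter s, ENNReal.toReal_prod]
  -- split the ≤ h filter as (< h) plus h
  have hfilter : Finset.univ.filter (fun l => l ≤ h)
      = insert h (Finset.univ.filter (fun l : Fin n => l < h)) := by
    ext l
    simp [le_iff_lt_or_eq, or_comm]
  have hnotmem : h ∉ Finset.univ.filter (fun l : Fin n => l < h) := by simp
  -- closed form for the cumulative sum of r
  have hrsum : ∑ l ∈ Finset.univ.filter (fun l => l ≤ h), r l
      = (μ (A h)).toReal
        + ∑ l ∈ Finset.univ.filter (fun l => l < h), (μ (A l \ A h)).toReal := by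
    rw [hfilter, Finset.sum_insert hnotmem, hr h]
    have hterm : ∀ l : Fin n, l < h →
        (∏ x ∈ T l, (μ (B x)).toReal) * (1 - ∏ x ∈ T h \ T l, (μ (B x)).toReal)
          = (μ (A l \ A h)).toReal := by
      intro l _
      have hinter : A l ∩ A h = ⋂ x ∈ (T l ∪ T h : Finset ι), B x := by
        ext ω
        simp only [hAdef, Set.mem_inter_iff, Set.mem_iInter, Finset.mem_union]
        constructor
        · rintro ⟨h1, h2⟩ x hx
          rcases hx with hx | hx
          · exact h1 x hx
          · exact h2 x hx
        · intro hx
          exact ⟨fun x h' => hx x (Or.inl h'), fun x h' => hx x (Or.inr h')⟩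
      have hsplit : (μ (A l ∩ A h)).toReal
          = (∏ x ∈ T l, (μ (B x)).toReal) * ∏ x ∈ T h \ T l, (μ (B x)).toReal := by
        rw [hinter, hprod, ← Finset.union_sdiff_self_eq_union,
          Finset.prod_union Finset.disjoint_sdiff]
      have hdiff : (μ (A l ∩ A h)).toReal + (μ (A l \ A h)).toReal = (μ (A l)).toReal := by
        rw [← ENNReal.toReal_add (hfin _) (hfin _), measure_inter_add_diff (A l) (hAmeas h)]
      have hAl : (μ (A l)).toReal = ∏ x ∈ T l, (μ (B x)).toReal := hprod (T l)
      nlinarith [hsplit, hdiff, hAl]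
    rw [Finset.sum_congr rfl (fun l hl => hterm l (Finset.mem_filter.1 hl).2)]
    have : (∏ x ∈ T h, (μ (B x)).toReal) = (μ (A h)).toReal := (hprod (T h)).symm
    rw [this]; ring
  rw [hrsum]
  -- measure-theoretic bound
  have hunion : (⋃ l ∈ Finset.univ.filter (fun l : Fin n => l ≤ h), E l)
      ⊆ A h ∪ ⋃ l ∈ Finset.univ.filter (fun l : Fin n => l < h), (A l \ A h) := by
    intro ω hω
    simp only [Set.mem_iUnion, Finset.mem_filter, Finset.mem_univ, true_and] at hω
    obtain ⟨l, hl, hωl⟩ := hω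
    by_cases hωA : ω ∈ A h
    · exact Or.inl hωA
    · right
      simp only [Set.mem_iUnion, Finset.mem_filter, Finset.mem_univ, true_and]
      have hlh : l < h := by
        rcases lt_or_eq_of_le hl with h' | h'
        · exact h'
        · exact absurd (hsub h (h' ▸ hωl)) hωA
      exact ⟨l, hlh, hsub l hωl, hωA⟩
  have hmeasineq : ∑ l ∈ Finset.univ.filter (fun l : Fin n => l ≤ h), μ (E l)
      ≤ μ (A h) + ∑ l ∈ Finset.univ.filter (fun l : Fin n => l < h), μ (A l \ A h) := by
    calc ∑ l ∈ Finset.univ.filter (fun l : Fin n => l ≤ h), μ (E l)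
        = μ (⋃ l ∈ Finset.univ.filter (fun l : Fin n => l ≤ h), E l) := by
          rw [measure_biUnion_finset (fun a _ b _ hab => hdisj hab) (fun l _ => hE l)]
      _ ≤ μ (A h ∪ ⋃ l ∈ Finset.univ.filter (fun l : Fin n => l < h), (A l \ A h)) :=
          measure_mono hunion
      _ ≤ μ (A h) + μ (⋃ l ∈ Finset.univ.filter (fun l : Fin n => l < h), (A l \ A h)) :=
          measure_union_le _ _
      _ ≤ μ (A h) + ∑ l ∈ Finset.univ.filter (fun l : Fin n => l < h), μ (A l \ A h) := by
          gcongr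
          exact measure_biUnion_finset_le _ _
  have hRfin : μ (A h) + ∑ l ∈ Finset.univ.filter (fun l : Fin n => l < h), μ (A l \ A h) ≠ ⊤ := by
    exact ENNReal.add_ne_top.2 ⟨hfin _, (ENNReal.sum_lt_top.2 fun l _ => (measure_lt_top μ _)).ne⟩
  calc (∑ l ∈ Finset.univ.filter (fun l => l ≤ h), (μ (E l)).toReal)
      = (∑ l ∈ Finset.univ.filter (fun l : Fin n => l ≤ h), μ (E l)).toReal := by
        rw [ENNReal.toReal_sum (fun l _ => hfin _)]
    _ ≤ (μ (A h) + ∑ l ∈ Finset.univ.filter (fun l : Fin n => l < h), μ (A l \ A h)).toReal :=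
        ENNReal.toReal_mono hRfin hmeasineq
    _ = (μ (A h)).toReal
        + ∑ l ∈ Finset.univ.filter (fun l : Fin n => l < h), (μ (A l \ A h)).toReal := by
        rw [ENNReal.toReal_add (hfin _) ((ENNReal.sum_lt_top.2 fun l _ => measure_lt_top μ _).ne),
          ENNReal.toReal_sum (fun l _ => hfin _)]
end
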